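/- arXiv:2403.16109 — 3 statements merged into one kernel-verified Lean document; each statement's English description precedes it below -/
import Mathlib

section
/- Let L be a monomial ideal of the polynomial ring S = K[x_1,…,x_n] over a field K. Then the integral closure of L is the monomial ideal generated by all monomials x^α such that α lies in conv(log L) ∩ ℤ_{≥0}^n, where log L ⊆ ℤ_{≥0}^n is the set of exponent vectors of all monomials belonging to L and conv(log L) denotes its convex hull (taken with nonnegative rational coefficients). -/
open MvPolynomial

/-- `f` is integral over the ideal `I`: it satisfies an equation
`f^k + c₁ f^(k-1) + ⋯ + c_k = 0` with `c_j ∈ I^j`. -/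
def Ideal.IsIntegralElemOver {R : Type*} [CommRing R] (I : Ideal R) (f : R) : Prop :=
  ∃ k : ℕ, 0 < k ∧ ∃ c : ℕ → R, (∀ j, 1 ≤ j → j ≤ k → c j ∈ I ^ j) ∧
    f ^ k + ∑ j ∈ Finset.Icc 1 k, c j * f ^ (k - j) = 0

/-- The integral closure of an ideal `I`, the ideal of all elements integral over `I`. -/
def Ideal.intClosure {R : Type*} [CommRing R] (I : Ideal R) : Ideal R :=
  Ideal.span {f | I.IsIntegralElemOver f}

/-!
If `N • a` is a sum of `N` exponents of monomials of `L`, then `(x^a)^N ∈ L^N`, so `x^a` is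
integral over `L`. Conversely, let `f` be integral over `L = (x^b : b ∈ A₀)` with `A₀` finite
and let `x^α` be a term of `f`. For every weight `w ∈ ℕⁿ` the `w`-order `v` is a valuation, and
`v(c_j) ≥ j · min_b w·b` for `c_j ∈ L^j`; comparing orders in the equation of integral dependence
gives `w·α ≥ v(f) ≥ min_b w·b`. By Farkas' lemma this family of inequalities says that `α`
lies in `conv(A₀) + ℚ≥0ⁿ`, and since `log L` is an upper set the slack can be absorbed into one
of the points: `α` is a rational convex combination of exponents of monomials of `L`.
-/

theorem exists_pos_nat_mul_eq_natCast {ι : Type*} (s : Finset ι) (q : ι → ℚ)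
    (hq : ∀ i ∈ s, 0 ≤ q i) : ∃ N : ℕ, 0 < N ∧ ∃ p : ι → ℕ, ∀ i ∈ s, (p i : ℚ) = N * q i := by
  refine ⟨∏ i ∈ s, (q i).den, Finset.prod_pos fun i _ => (q i).den_pos,
    fun i => (q i).num.toNat * ((∏ j ∈ s, (q j).den) / (q i).den), fun i hi => ?_⟩
  have hnum : ((q i).num.toNat : ℚ) = (q i).num := by
    exact_mod_cast Int.toNat_of_nonneg (Rat.num_nonneg.2 (hq i hi))
  rw [Nat.cast_mul, Nat.cast_div (Finset.dvd_prod_of_mem _ hi) (by positivity), hnum]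
  nth_rewrite 3 [← Rat.num_div_den (q i)]
  ring

theorem Module.Dual.apply_prod_eq_dotProduct_add {R σ : Type*} [CommSemiring R] [Fintype σ]
    [DecidableEq σ] (φ : Module.Dual R ((σ → R) × R)) (y : σ → R) (t : R) :
    φ (y, t) = (fun j => φ (Pi.single j 1, 0)) ⬝ᵥ y + t * φ (0, 1) := by
  have hyt : (y, t) = ∑ j, y j • ((Pi.single j 1 : σ → R), (0 : R)) + t • (0, 1) := by
    ext j <;> simp [Prod.fst_sum, Prod.snd_sum, Finset.sum_apply, Pi.single_apply]
  rw [hyt, map_add, map_sum]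
  simp only [map_smul, smul_eq_mul, dotProduct, mul_comm]

section Farkas

variable {𝕜 V : Type*} [Field 𝕜] [LinearOrder 𝕜] [IsStrictOrderedRing 𝕜]
  [AddCommGroup V] [Module 𝕜 V]

theorem PointedCone.exists_dual_nonneg_of_notMem_hull {ι : Type*} (s : Finset ι) (v : ι → V)
    {x : V} (hx : x ∉ PointedCone.hull 𝕜 (v '' s)) :
    ∃ φ : Module.Dual 𝕜 V, (∀ i ∈ s, 0 ≤ φ (v i)) ∧ φ x < 0 := by
  classical
  induction s using Finset.induction_on generalizing v x with
  | empty =>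
    obtain ⟨φ, hφ⟩ : ∃ φ : Module.Dual 𝕜 V, φ x ≠ 0 := by
      by_contra! h
      exact hx ((Module.forall_dual_apply_eq_zero_iff 𝕜 x).1 h ▸ zero_mem _)
    rcases hφ.lt_or_gt with h | h
    · exact ⟨φ, by simp, h⟩
    · exact ⟨-φ, by simp, by simpa using h⟩
  | insert i s hi ih =>
    rw [Finset.coe_insert, Set.image_insert_eq] at hx
    obtain ⟨ψ, hψs, hψx⟩ := ih v fun h => hx (Submodule.span_mono (Set.subset_insert _ _) h)
    by_cases hψi : 0 ≤ ψ (v i)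
    · exact ⟨ψ, Finset.forall_mem_insert _ _ _ |>.2 ⟨hψi, hψs⟩, hψx⟩
    push Not at hψi
    -- `P` projects along `v i` onto `ker ψ`; a conic representation of `P x` by the `P (v j)`
    -- lifts to one of `x` by the `v j` and `v i`.
    let P : V →ₗ[𝕜] V := ψ.smulRight (v i) - ψ (v i) • LinearMap.id
    have hP : ∀ u, P u = ψ u • v i - ψ (v i) • u := fun u => rfl
    obtain ⟨φ, hφs, hφx⟩ := ih (P ∘ v) (x := P x) fun hPx => by
      obtain ⟨z, hz, hPz⟩ : P x ∈ (Submodule.span {c : 𝕜 // 0 ≤ c} (v '' s)).map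
          (P.restrictScalars {c : 𝕜 // 0 ≤ c}) := by
        rwa [Submodule.map_span, ← Set.image_comp]
      have hψz : 0 ≤ ψ z := by
        have : PointedCone.hull 𝕜 (v '' s) ≤
            (PointedCone.positive 𝕜 𝕜).comap (ψ.restrictScalars _) := by
          rw [Submodule.span_le]
          rintro _ ⟨j, hj, rfl⟩
          simpa using hψs j hj
        simpa using this hz
      apply hx
      rw [Submodule.mem_span_insert]
      refine ⟨⟨(ψ x - ψ z) / ψ (v i), div_nonneg_of_nonpos (by linarith) hψi.le⟩, z, hz, ?_⟩
      have hPz' : ψ z • v i - ψ (v i) • z = ψ x • v i - ψ (v i) • x := by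
        simpa [hP] using hPz
      show x = ((ψ x - ψ z) / ψ (v i)) • v i + z
      apply smul_right_injective V hψi.ne
      simp only [smul_add, smul_smul, mul_div_cancel₀ _ hψi.ne]
      linear_combination (norm := module) hPz'
    refine ⟨φ.comp P, Finset.forall_mem_insert _ _ _ |>.2 ⟨?_, hφs⟩, hφx⟩
    simp [hP]

/-- Homogenize: `x ∈ conv (v '' s) + 𝕜≥0ⁿ` iff `(x, 1)` lies in the cone spanned by the
`(v i, 1)` and the `(eⱼ, 0)`. -/
theorem exists_sum_smul_le_of_forall_exists_dotProduct_le {ι σ : Type*} [Fintype σ]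
    (s : Finset ι) (v : ι → σ → 𝕜) (x : σ → 𝕜)
    (h : ∀ l : σ → 𝕜, 0 ≤ l → ∃ i ∈ s, l ⬝ᵥ v i ≤ l ⬝ᵥ x) :
    ∃ c : ι → 𝕜, (∀ i ∈ s, 0 ≤ c i) ∧ ∑ i ∈ s, c i = 1 ∧ ∑ i ∈ s, c i • v i ≤ x := by
  classical
  let u : s ⊕ σ → (σ → 𝕜) × 𝕜 := Sum.elim (fun i => (v i, 1)) (fun j => (Pi.single j 1, 0))
  by_cases hx : (x, 1) ∈ PointedCone.hull 𝕜 (u '' (Finset.univ : Finset (s ⊕ σ)))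
  · rw [Finset.coe_univ, Set.image_univ, Submodule.mem_span_range_iff_exists_fun] at hx
    obtain ⟨c, hc⟩ := hx
    rw [Fintype.sum_sum_type] at hc
    have h1 := congrArg Prod.fst hc
    have h2 := congrArg Prod.snd hc
    simp only [u, Prod.fst_add, Prod.snd_add, Prod.fst_sum, Prod.snd_sum, Sum.elim_inl,
      Sum.elim_inr, Prod.smul_mk, ← Nonneg.coe_smul, smul_eq_mul, mul_one, mul_zero,
      Finset.sum_const_zero, add_zero] at h1 h2
    let c' : ι → 𝕜 := fun i => if h : i ∈ s then (c (.inl ⟨i, h⟩) : 𝕜) else 0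
    have hc'v : ∑ i ∈ s, c' i • v i = ∑ i : s, (c (.inl i) : 𝕜) • v i := by
      rw [← Finset.sum_attach]
      exact Finset.sum_congr rfl fun i _ => by simp [c', i.2]
    have hc'1 : ∑ i ∈ s, c' i = ∑ i : s, (c (.inl i) : 𝕜) := by
      rw [← Finset.sum_attach]
      exact Finset.sum_congr rfl fun i _ => by simp [c', i.2]
    refine ⟨c', fun i hi => by simp [c', hi, (c _).2], hc'1.trans h2, ?_⟩
    rw [hc'v, ← h1]
    exact le_add_of_nonneg_right (Finset.sum_nonneg fun j _ =>
      smul_nonneg (c _).2 (Pi.single_nonneg.2 zero_le_one))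
  · obtain ⟨φ, hφ, hφx⟩ := PointedCone.exists_dual_nonneg_of_notMem_hull _ u hx
    obtain ⟨i, hi, hle⟩ := h (fun j => φ (Pi.single j 1, 0))
      (fun j => hφ (.inr j) (Finset.mem_univ _))
    have hi' := hφ (.inl ⟨i, hi⟩) (Finset.mem_univ _)
    simp only [u, Sum.elim_inl] at hi'
    rw [Module.Dual.apply_prod_eq_dotProduct_add] at hi' hφx
    linarith

end Farkas

namespace Ideal

variable {R S : Type*} [CommRing R] [CommRing S]

theorem IsIntegralElemOver.map {I : Ideal R} {f : R} (hf : I.IsIntegralElemOver f)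
    (φ : R →+* S) : (I.map φ).IsIntegralElemOver (φ f) := by
  obtain ⟨k, hk, c, hc, heq⟩ := hf
  refine ⟨k, hk, φ ∘ c, fun j hj1 hj2 => ?_, ?_⟩
  · rw [← Ideal.map_pow]
    exact Ideal.mem_map_of_mem φ (hc j hj1 hj2)
  · simpa [map_sum] using congrArg φ heq

theorem isIntegralElemOver_of_pow_mem_pow {I : Ideal R} {f : R} {N : ℕ} (hN : 0 < N)
    (hf : f ^ N ∈ I ^ N) : I.IsIntegralElemOver f := by
  refine ⟨N, hN, fun j => if j = N then -f ^ N else 0, fun j _ _ => ?_, ?_⟩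
  · dsimp only
    split_ifs with h
    · rw [h]
      exact neg_mem hf
    · exact zero_mem _
  · rw [Finset.sum_eq_single_of_mem N (Finset.mem_Icc.2 ⟨hN, le_rfl⟩) fun j _ hj => by simp [hj]]
    simp

end Ideal

namespace MvPowerSeries

variable {σ R : Type*} (w : σ → ℕ)

theorem le_weightedOrder_sum [Semiring R] {ι : Type*} (s : Finset ι) (f : ι → MvPowerSeries σ R)
    {n : ℕ∞} (h : ∀ i ∈ s, n ≤ (f i).weightedOrder w) : n ≤ (∑ i ∈ s, f i).weightedOrder w :=
  le_weightedOrder w fun d hd => by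
    rw [map_sum]
    exact Finset.sum_eq_zero fun i hi => coeff_eq_zero_of_lt_weightedOrder w (hd.trans_le (h i hi))

theorem nsmul_le_weightedOrder_of_mem_pow [CommSemiring R] {I : Ideal (MvPowerSeries σ R)}
    {m : ℕ∞} (hI : ∀ g ∈ I, m ≤ g.weightedOrder w) {j : ℕ} {g : MvPowerSeries σ R}
    (hg : g ∈ I ^ j) : j • m ≤ g.weightedOrder w := by
  induction j generalizing g with
  | zero => simp
  | succ j ih =>
    rw [pow_succ] at hg
    refine Submodule.mul_induction_on hg (fun a ha b hb => ?_) (fun a b ha hb => ?_)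
    · rw [succ_nsmul]
      exact (add_le_add (ih ha) (hI b hb)).trans (le_weightedOrder_mul w)
    · exact (le_min ha hb).trans (min_weightedOrder_le_add w)

theorem le_weightedOrder_of_mem_span_monomial [CommSemiring R] {A : Set (σ →₀ ℕ)} {m : ℕ∞}
    (hA : ∀ a ∈ A, m ≤ Finsupp.weight w a) {g : MvPowerSeries σ R}
    (hg : g ∈ Ideal.span ((fun a => monomial a (1 : R)) '' A)) : m ≤ g.weightedOrder w := by
  induction hg using Submodule.span_induction with
  | mem x hx =>
    obtain ⟨a, ha, rfl⟩ := hx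
    classical
    rw [weightedOrder_monomial]
    split_ifs
    exacts [le_top, hA a ha]
  | zero => simp
  | add x y _ _ hx hy => exact (le_min hx hy).trans (min_weightedOrder_le_add w)
  | smul r x _ hx => exact hx.trans (le_add_self.trans (le_weightedOrder_mul w))

variable [CommRing R] [IsDomain R]

theorem weightedOrder_pow (f : MvPowerSeries σ R) (k : ℕ) :
    (f ^ k).weightedOrder w = k • f.weightedOrder w := by
  induction k with
  | zero => simp
  | succ k ih => rw [pow_succ, weightedOrder_mul, ih, succ_nsmul]

/-- If `v(F) = d < m`, then every term `c_j F^(k-j)` of the equation of integral dependence has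
order at least `j m + (k - j) d > k d = v(F^k)`, which is impossible. -/
theorem le_weightedOrder_of_isIntegralElemOver {I : Ideal (MvPowerSeries σ R)} {m : ℕ∞}
    (hI : ∀ g ∈ I, m ≤ g.weightedOrder w) {F : MvPowerSeries σ R} (hF : I.IsIntegralElemOver F) :
    m ≤ F.weightedOrder w := by
  obtain ⟨k, -, c, hc, heq⟩ := hF
  by_contra! hlt
  obtain ⟨d, hd⟩ := ENat.ne_top_iff_exists.1 (hlt.trans_le le_top).ne
  have hm : ((d + 1 : ℕ) : ℕ∞) ≤ m := by
    rw [← hd] at hlt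
    exact_mod_cast Order.add_one_le_of_lt hlt
  have hFk : ((k * d + 1 : ℕ) : ℕ∞) ≤ (F ^ k).weightedOrder w := by
    rw [eq_neg_of_add_eq_zero_left heq, weightedOrder_neg]
    refine le_weightedOrder_sum w _ _ fun j hj => ?_
    obtain ⟨hj1, hjk⟩ := Finset.mem_Icc.1 hj
    calc ((k * d + 1 : ℕ) : ℕ∞) ≤ j • ((d + 1 : ℕ) : ℕ∞) + (k - j) • (d : ℕ∞) := by
          simp only [nsmul_eq_mul]
          norm_cast
          zify [hjk]
          nlinarith
      _ ≤ (c j).weightedOrder w + (F ^ (k - j)).weightedOrder w := by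
          rw [weightedOrder_pow, ← hd]
          exact add_le_add ((nsmul_le_nsmul_right hm j).trans
            (nsmul_le_weightedOrder_of_mem_pow w hI (hc j hj1 hjk))) le_rfl
      _ ≤ _ := le_weightedOrder_mul w
  rw [weightedOrder_pow, ← hd] at hFk
  simp only [nsmul_eq_mul] at hFk
  norm_cast at hFk
  omega

end MvPowerSeries

theorem Multiset.exists_card_nsmul_eq_sum_of_sum_le {M : Type*} [AddCommMonoid M]
    [PartialOrder M] [CanonicallyOrderedAdd M] [Sub M] [OrderedSub M]
    {P : Set M} (hP : IsUpperSet P) {m : Multiset M} (hm0 : m ≠ 0) (hmP : ∀ b ∈ m, b ∈ P)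
    {a : M} (hle : m.sum ≤ Multiset.card m • a) :
    ∃ m' : Multiset M, m' ≠ 0 ∧ (∀ b ∈ m', b ∈ P) ∧ Multiset.card m' • a = m'.sum := by
  classical
  obtain ⟨b₀, hb₀⟩ := Multiset.exists_mem_of_ne_zero hm0
  refine ⟨(b₀ + (Multiset.card m • a - m.sum)) ::ₘ m.erase b₀, Multiset.cons_ne_zero,
    fun b hb => ?_, ?_⟩
  · rcases Multiset.mem_cons.1 hb with rfl | hb
    · exact hP le_self_add (hmP b₀ hb₀)
    · exact hmP b (Multiset.mem_of_mem_erase hb)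
  · rw [Multiset.card_cons, Multiset.card_erase_add_one hb₀, Multiset.sum_cons, add_right_comm,
      Multiset.sum_erase hb₀, add_comm, tsub_add_cancel_of_le hle]

section ExponentAverages

variable {σ : Type*}

theorem exists_multiset_of_weights (s : Finset (σ →₀ ℕ)) (w : (σ →₀ ℕ) → ℚ)
    (hw0 : ∀ b ∈ s, 0 ≤ w b) (hw1 : ∑ b ∈ s, w b = 1) :
    ∃ m : Multiset (σ →₀ ℕ), m ≠ 0 ∧ (∀ b ∈ m, b ∈ s) ∧
      ∀ i, (m.sum i : ℚ) = Multiset.card m * ∑ b ∈ s, w b * b i := by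
  obtain ⟨N, hN, p, hp⟩ := exists_pos_nat_mul_eq_natCast s w hw0
  have hcard : ∑ b ∈ s, p b = N := by
    have : ∑ b ∈ s, (p b : ℚ) = N := by
      rw [Finset.sum_congr rfl hp, ← Finset.mul_sum, hw1, mul_one]
    exact_mod_cast this
  refine ⟨∑ b ∈ s, Multiset.replicate (p b) b, ?_, fun b hb => ?_, fun i => ?_⟩
  · simp only [← Multiset.card_pos, Multiset.card_sum, Multiset.card_replicate, hcard, hN]
  · obtain ⟨c, hc, hbc⟩ := Multiset.mem_sum.1 hb
    exact Multiset.eq_of_mem_replicate hbc ▸ hc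
  · simp only [Multiset.card_sum, Multiset.card_replicate, hcard, Multiset.sum_sum,
      Multiset.sum_replicate, Finsupp.finsetSum_apply, Finsupp.smul_apply, smul_eq_mul,
      Nat.cast_sum, Nat.cast_mul, Finset.mul_sum]
    exact Finset.sum_congr rfl fun b hb => by rw [hp b hb, mul_assoc]

theorem exists_weights_iff_exists_multiset (P : Set (σ →₀ ℕ)) (a : σ →₀ ℕ) :
    (∃ (s : Finset (σ →₀ ℕ)) (w : (σ →₀ ℕ) → ℚ), (∀ b ∈ s, b ∈ P) ∧ (∀ b ∈ s, 0 ≤ w b) ∧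
      ∑ b ∈ s, w b = 1 ∧ ∀ i, (a i : ℚ) = ∑ b ∈ s, w b * b i) ↔
    ∃ m : Multiset (σ →₀ ℕ), m ≠ 0 ∧ (∀ b ∈ m, b ∈ P) ∧ Multiset.card m • a = m.sum := by
  classical
  constructor
  · rintro ⟨s, w, hsP, hw0, hw1, ha⟩
    obtain ⟨m, hm0, hms, hmsum⟩ := exists_multiset_of_weights s w hw0 hw1
    refine ⟨m, hm0, fun b hb => hsP b (hms b hb), Finsupp.ext fun i => ?_⟩
    have : ((Multiset.card m • a) i : ℚ) = m.sum i := by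
      rw [hmsum, ← ha, Finsupp.smul_apply, smul_eq_mul, Nat.cast_mul]
    exact_mod_cast this
  · rintro ⟨m, hm0, hmP, ha⟩
    have hcard : (0 : ℚ) < Multiset.card m := by exact_mod_cast Multiset.card_pos.2 hm0
    refine ⟨m.toFinset, fun b => Multiset.count b m / Multiset.card m,
      fun b hb => hmP b (Multiset.mem_toFinset.1 hb), fun b _ => by positivity, ?_, fun i => ?_⟩
    · rw [← Finset.sum_div, div_eq_one_iff_eq hcard.ne']
      exact_mod_cast Multiset.toFinset_sum_count_eq m
    · have hi := congrArg (fun x : σ →₀ ℕ => (x i : ℚ)) ha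
      simp only [Finsupp.smul_apply, smul_eq_mul, Nat.cast_mul, Finset.sum_multiset_count m,
        Finsupp.finsetSum_apply, Nat.cast_sum] at hi
      simp only [div_mul_eq_mul_div, ← Finset.sum_div, ← hi]
      field_simp

end ExponentAverages

namespace MvPolynomial

variable {σ R : Type*}

theorem isUpperSet_setOf_monomial_mem [CommSemiring R] (I : Ideal (MvPolynomial σ R)) :
    IsUpperSet {b : σ →₀ ℕ | monomial b (1 : R) ∈ I} := fun a b hab ha => by
  rw [Set.mem_ofPred_eq, ← tsub_add_cancel_of_le hab, ← mul_one (1 : R), ← monomial_mul]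
  exact I.mul_mem_left _ ha

theorem monomial_multiset_sum_mem_pow [CommSemiring R] {I : Ideal (MvPolynomial σ R)}
    (m : Multiset (σ →₀ ℕ)) (hm : ∀ b ∈ m, monomial b (1 : R) ∈ I) :
    monomial m.sum (1 : R) ∈ I ^ Multiset.card m := by
  induction m using Multiset.induction_on with
  | empty => simp
  | cons b m ih =>
    rw [Multiset.sum_cons, Multiset.card_cons, pow_succ', ← mul_one (1 : R), ← monomial_mul]
    exact Ideal.mul_mem_mul (hm b (Multiset.mem_cons_self b m))
      (ih fun x hx => hm x (Multiset.mem_cons_of_mem hx))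

theorem isIntegralElemOver_monomial_of_card_nsmul_eq_sum [CommRing R]
    {I : Ideal (MvPolynomial σ R)} {a : σ →₀ ℕ} {m : Multiset (σ →₀ ℕ)} (hm0 : m ≠ 0)
    (hm : ∀ b ∈ m, monomial b (1 : R) ∈ I) (ha : Multiset.card m • a = m.sum) :
    I.IsIntegralElemOver (monomial a (1 : R)) := by
  refine Ideal.isIntegralElemOver_of_pow_mem_pow (Multiset.card_pos.2 hm0) ?_
  rw [monomial_pow, one_pow, ha]
  exact monomial_multiset_sum_mem_pow m hm

theorem exists_weight_le_of_isIntegralElemOver [CommRing R] [IsDomain R] {A : Finset (σ →₀ ℕ)}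
    {f : MvPolynomial σ R}
    (hf : (Ideal.span ((fun a => monomial a (1 : R)) '' A)).IsIntegralElemOver f)
    {α : σ →₀ ℕ} (hα : α ∈ f.support) (w : σ → ℕ) :
    ∃ b ∈ A, Finsupp.weight w b ≤ Finsupp.weight w α := by
  have hI : ∀ g ∈ (Ideal.span ((fun a => monomial a (1 : R)) '' A)).map
      (coeToMvPowerSeries.ringHom (σ := σ) (R := R)),
      A.inf (fun b => (Finsupp.weight w b : ℕ∞)) ≤ g.weightedOrder w := by
    intro g hg
    rw [Ideal.map_span, Set.image_image] at hg
    simp only [coeToMvPowerSeries.ringHom_apply, coe_monomial] at hg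
    exact MvPowerSeries.le_weightedOrder_of_mem_span_monomial w
      (fun a ha => Finset.inf_le (f := fun b => (Finsupp.weight w b : ℕ∞)) ha) hg
  have hle := (MvPowerSeries.le_weightedOrder_of_isIntegralElemOver w hI
    (hf.map coeToMvPowerSeries.ringHom)).trans
    (MvPowerSeries.weightedOrder_le w (d := α) (by rwa [coeToMvPowerSeries.ringHom_apply,
      coeff_coe, ← mem_support_iff]))
  exact_mod_cast (Finset.inf_le_iff (ENat.natCast_lt_top _)).1 hle

theorem exists_finset_span_monomial_eq [Finite σ] [CommRing R] [IsNoetherianRing R]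
    (A : Set (σ →₀ ℕ)) : ∃ A₀ : Finset (σ →₀ ℕ),
      Ideal.span ((fun a => monomial a (1 : R)) '' A) =
        Ideal.span ((fun a => monomial a (1 : R)) '' A₀) := by
  classical
  obtain ⟨t, ht, heq⟩ := (Submodule.fg_span_iff_fg_span_finset_subset _).1
    (IsNoetherian.noetherian (Ideal.span ((fun a => monomial a (1 : R)) '' A)))
  obtain ⟨A₀, -, rfl⟩ := Finset.subset_set_image_iff.1 ht
  exact ⟨A₀, by rw [← Finset.coe_image]; exact heq⟩

theorem exists_multiset_of_isIntegralElemOver [Fintype σ] [CommRing R] [IsDomain R]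
    [IsNoetherianRing R] {A : Set (σ →₀ ℕ)}
    {f : MvPolynomial σ R}
    (hf : (Ideal.span ((fun a => monomial a (1 : R)) '' A)).IsIntegralElemOver f)
    {α : σ →₀ ℕ} (hα : α ∈ f.support) :
    ∃ m : Multiset (σ →₀ ℕ), m ≠ 0 ∧
      (∀ b ∈ m, monomial b (1 : R) ∈ Ideal.span ((fun a => monomial a (1 : R)) '' A)) ∧
      Multiset.card m • α = m.sum := by
  obtain ⟨A₀, hA₀⟩ := exists_finset_span_monomial_eq (R := R) A
  rw [hA₀] at hf ⊢
  obtain ⟨c, hc0, hc1, hcα⟩ := exists_sum_smul_le_of_forall_exists_dotProduct_le A₀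
    (fun b i => (b i : ℚ)) (fun i => (α i : ℚ)) fun l hl => by
      obtain ⟨N, hN, p, hp⟩ := exists_pos_nat_mul_eq_natCast Finset.univ l fun i _ => hl i
      have hweight : ∀ b : σ →₀ ℕ,
          (Finsupp.weight p b : ℚ) = N * (l ⬝ᵥ fun i => (b i : ℚ)) := by
        intro b
        rw [Finsupp.weight_apply, Finsupp.sum_fintype _ _ (by simp), dotProduct, Finset.mul_sum]
        push_cast
        exact Finset.sum_congr rfl fun i hi => by rw [smul_eq_mul, Nat.cast_mul, hp i hi]; ring
      obtain ⟨b, hb, hle⟩ := exists_weight_le_of_isIntegralElemOver hf hα p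
      refine ⟨b, hb, le_of_mul_le_mul_left ?_ (Nat.cast_pos.2 hN : (0 : ℚ) < N)⟩
      rw [← hweight, ← hweight]
      exact_mod_cast hle
  obtain ⟨m, hm0, hmA, hmsum⟩ := exists_multiset_of_weights A₀ c hc0 hc1
  have hle : m.sum ≤ Multiset.card m • α := Finsupp.le_def.2 fun i => by
    have : (m.sum i : ℚ) ≤ (Multiset.card m • α) i := by
      rw [hmsum, Finsupp.smul_apply, smul_eq_mul, Nat.cast_mul]
      refine mul_le_mul_of_nonneg_left ?_ (Nat.cast_nonneg _)
      simpa [Finset.sum_apply] using hcα i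
    exact_mod_cast this
  obtain ⟨m', hm'0, hm'L, hm'α⟩ := Multiset.exists_card_nsmul_eq_sum_of_sum_le
    (isUpperSet_setOf_monomial_mem (Ideal.span ((fun a => monomial a (1 : R)) '' A₀))) hm0
    (fun b hb => Ideal.subset_span ⟨b, hmA b hb, rfl⟩) hle
  exact ⟨m', hm'0, hm'L, hm'α⟩

end MvPolynomial

/-- For a monomial ideal `L ⊆ K[x_1, …, x_n]`, the integral closure of `L`
is the monomial ideal generated by all monomials `x^α` with
`α ∈ conv(log L) ∩ ℤ_{≥0}^n`, where `log L` is the set of exponent vectors of monomials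
lying in `L` and the convex hull is taken with nonnegative rational coefficients. -/
theorem stmt0 {K : Type*} [Field K] {n : ℕ} (L : Ideal (MvPolynomial (Fin n) K))
    (A : Set (Fin n →₀ ℕ))
    (hL : L = Ideal.span ((fun a => monomial a (1 : K)) '' A)) :
    L.intClosure =
      Ideal.span ((fun a => monomial a (1 : K)) ''
        {a : Fin n →₀ ℕ |
          ∃ (s : Finset (Fin n →₀ ℕ)) (w : (Fin n →₀ ℕ) → ℚ),
            (∀ b ∈ s, monomial b (1 : K) ∈ L) ∧
            (∀ b ∈ s, 0 ≤ w b) ∧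
            (∑ b ∈ s, w b) = 1 ∧
            (∀ i : Fin n, (a i : ℚ) = ∑ b ∈ s, w b * (b i : ℚ))}) := by
  apply le_antisymm
  · refine Ideal.span_le.2 fun f hf => mem_ideal_span_monomial_image.2 fun α hα => ⟨α, ?_, le_rfl⟩
    subst hL
    exact (exists_weights_iff_exists_multiset _ α).2
      (exists_multiset_of_isIntegralElemOver hf hα)
  · refine Ideal.span_le.2 ?_
    rintro _ ⟨a, ha, rfl⟩
    obtain ⟨m, hm0, hmL, hma⟩ := (exists_weights_iff_exists_multiset _ a).1 ha
    exact Ideal.subset_span (isIntegralElemOver_monomial_of_card_nsmul_eq_sum hm0 hmL hma)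
end

section
/- Let G be a strong quasi-n-partite graph and I(G) its edge ideal in T. Then the integral closure I(G)̄ is generated by monomials of degree 2. -/
open MvPolynomial

/-- The edge ideal of the strong quasi-`n`-partite graph: the complete `n`-partite graph
on `V₁ ∪ ⋯ ∪ Vₙ`, `Vᵢ = {x_{i1}, …, x_{im_i}}`, with a loop at every vertex; it is
generated by the `x_{ih} x_{i'h'}` with `i ≠ i'` and the `x_{ih}²`. -/
noncomputable def edgeIdealSQ (K : Type*) [Field K] (n : ℕ) (m : Fin n → ℕ) :
    Ideal (MvPolynomial (Σ i : Fin n, Fin (m i)) K) :=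
  Ideal.span
    ({f | ∃ (i i' : Fin n) (h : Fin (m i)) (h' : Fin (m i')),
        i ≠ i' ∧ f = X ⟨i, h⟩ * X ⟨i', h'⟩} ∪
     {f | ∃ (i : Fin n) (h : Fin (m i)), f = X ⟨i, h⟩ ^ 2})

/-!
Let `𝔪` be the ideal of the variables. The generators of `I(G)` have degree two, so
`I(G) ⊆ 𝔪²`; and every product `xy` of two variables is integral over `I(G)`, because
`(xy)² = x² y² ∈ I(G)²`. Conversely `𝔪²` is integrally closed: the order of a polynomial
(the least total degree of its monomials) is an additive valuation, `𝔪²` is the ideal of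
polynomials of order at least two, and an ideal `{f | p ≤ v f}` cut out by a valuation is
integrally closed. Hence the integral closure of `I(G)` is `𝔪²`, which is spanned by the
monomials of degree two.
-/

namespace Ideal

variable {R : Type*} [CommRing R] {I J : Ideal R} {f : R}

theorem IsIntegralElemOver.mono (hIJ : I ≤ J) (hf : I.IsIntegralElemOver f) :
    J.IsIntegralElemOver f := by
  obtain ⟨k, hk, c, hc, heq⟩ := hf
  exact ⟨k, hk, c, fun j hj₁ hj₂ => pow_right_mono hIJ j (hc j hj₁ hj₂), heq⟩

theorem isIntegralElemOver_of_pow_mem_pow_s3 {k : ℕ} (hk : 0 < k) (hf : f ^ k ∈ I ^ k) :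
    I.IsIntegralElemOver f := by
  refine ⟨k, hk, fun j => if j = k then -f ^ k else 0, fun j _ _ => ?_, ?_⟩
  · beta_reduce
    split_ifs with hj
    · exact neg_mem (hj ▸ hf)
    · exact zero_mem _
  · rw [Finset.sum_eq_single_of_mem k (Finset.mem_Icc.mpr ⟨hk, le_rfl⟩)
      fun j _ hj => by simp [hj]]
    simp

end Ideal

namespace AddValuation

variable {R : Type*} [CommRing R] (v : AddValuation R ℕ∞) {I : Ideal R} {p : ℕ∞}

theorem nsmul_le_of_mem_pow (hI : ∀ x ∈ I, p ≤ v x) (j : ℕ) {x : R} (hx : x ∈ I ^ j) :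
    j • p ≤ v x := by
  induction j generalizing x with
  | zero => simp
  | succ j ih =>
    rw [pow_succ] at hx
    refine Submodule.mul_induction_on hx (fun a ha b hb => ?_) fun a b => v.map_le_add
    rw [v.map_mul, succ_nsmul]
    exact add_le_add (ih ha) (hI b hb)

/-- In `f ^ k = -∑ c_j f ^ (k - j)` the summands have valuation at least `j p + (k - j) v f`,
which exceeds `v (f ^ k) = k v f` if `v f < p`. -/
theorem le_of_isIntegralElemOver (hI : ∀ x ∈ I, p ≤ v x) {f : R}
    (hf : I.IsIntegralElemOver f) : p ≤ v f := by
  obtain ⟨k, hk, c, hc, heq⟩ := hf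
  by_contra! hlt
  obtain ⟨d, hd⟩ := ENat.ne_top_iff_exists.mp hlt.ne_top
  have hp : (d : ℕ∞) + 1 ≤ p := Order.add_one_le_of_lt (hd ▸ hlt)
  have hkd : k • v f = ((k * d : ℕ) : ℕ∞) := by rw [← hd]; simp
  have hterm : ∀ j ∈ Finset.Icc 1 k, k • v f < v (c j * f ^ (k - j)) := by
    intro j hj
    obtain ⟨hj₁, hj₂⟩ := Finset.mem_Icc.mp hj
    obtain ⟨t, rfl⟩ := Nat.exists_eq_add_of_le hj₂
    calc (j + t) • v f = (((j + t) * d : ℕ) : ℕ∞) := hkd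
      _ < ((j * (d + 1) + t * d : ℕ) : ℕ∞) := by rw [Nat.cast_lt]; nlinarith
      _ = j • ((d : ℕ∞) + 1) + t • v f := by rw [← hd]; push_cast; ring
      _ ≤ j • p + t • v f := by gcongr
      _ ≤ v (c j * f ^ (j + t - j)) := by
        rw [v.map_mul, v.map_pow, Nat.add_sub_cancel_left]
        exact add_le_add (v.nsmul_le_of_mem_pow hI j (hc j hj₁ hj₂)) le_rfl
  have : k • v f < v (f ^ k) := by
    rw [eq_neg_of_add_eq_zero_left heq, v.map_neg]
    exact v.map_lt_sum (hkd ▸ ENat.natCast_ne_top _) hterm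
  exact this.ne (v.map_pow f k).symm

end AddValuation

namespace MvPowerSeries

variable (σ R : Type*) [CommRing R] [IsDomain R]

noncomputable def orderAddValuation : AddValuation (MvPowerSeries σ R) ℕ∞ :=
  AddValuation.of order order_zero (weightedOrder_one _) (fun _ _ => min_order_le_add)
    order_mul

end MvPowerSeries

namespace MvPolynomial

variable {σ R : Type*} [CommRing R]

theorem mem_pow_idealOfVars_iff_le_order (n : ℕ) (f : MvPolynomial σ R) :
    f ∈ idealOfVars σ R ^ n ↔ (n : ℕ∞) ≤ (f : MvPowerSeries σ R).order := by
  rw [mem_pow_idealOfVars_iff']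
  refine ⟨fun h => MvPowerSeries.nat_le_order fun d hd => by rw [coeff_coe, h d hd],
    fun h d hd => ?_⟩
  rw [← coeff_coe]
  exact MvPowerSeries.coeff_of_lt_order (lt_of_lt_of_le (by exact_mod_cast hd) h)

theorem mem_pow_idealOfVars_of_isIntegralElemOver [IsDomain R] {n : ℕ} {f : MvPolynomial σ R}
    (hf : (idealOfVars σ R ^ n).IsIntegralElemOver f) : f ∈ idealOfVars σ R ^ n := by
  let v := (MvPowerSeries.orderAddValuation σ R).comap coeToMvPowerSeries.ringHom
  rw [mem_pow_idealOfVars_iff_le_order]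
  exact v.le_of_isIntegralElemOver (fun x hx => (mem_pow_idealOfVars_iff_le_order n x).mp hx) hf

theorem idealOfVars_sq_eq_span_X_mul_X :
    idealOfVars σ R ^ 2 = Ideal.span {f | ∃ u w, f = X u * X w} := by
  rw [sq, Ideal.span_mul_span']
  congr 1
  ext f
  simp [Set.mem_mul, eq_comm]

end MvPolynomial

section EdgeIdeal

variable {K : Type*} [Field K] {n : ℕ} {m : Fin n → ℕ}

theorem edgeIdealSQ_le_idealOfVars_sq :
    edgeIdealSQ K n m ≤ idealOfVars _ K ^ 2 := by
  rw [edgeIdealSQ, Ideal.span_le]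
  rintro f (⟨i, i', h, h', -, rfl⟩ | ⟨i, h, rfl⟩)
  · rw [sq]
    exact Ideal.mul_mem_mul (Ideal.subset_span (Set.mem_range_self _))
      (Ideal.subset_span (Set.mem_range_self _))
  · exact Ideal.pow_mem_pow (Ideal.subset_span (Set.mem_range_self _)) 2

theorem X_sq_mem_edgeIdealSQ (u : Σ i : Fin n, Fin (m i)) :
    (X u ^ 2 : MvPolynomial _ K) ∈ edgeIdealSQ K n m :=
  Ideal.subset_span (Or.inr ⟨u.1, u.2, rfl⟩)

theorem intClosure_edgeIdealSQ :
    (edgeIdealSQ K n m).intClosure = idealOfVars _ K ^ 2 := by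
  apply le_antisymm
  · rw [Ideal.intClosure, Ideal.span_le]
    exact fun f hf => mem_pow_idealOfVars_of_isIntegralElemOver
      (hf.mono edgeIdealSQ_le_idealOfVars_sq)
  · rw [idealOfVars_sq_eq_span_X_mul_X, Ideal.span_le]
    rintro _ ⟨u, w, rfl⟩
    refine Ideal.subset_span (Ideal.isIntegralElemOver_of_pow_mem_pow_s3 two_pos ?_)
    rw [mul_pow, sq (edgeIdealSQ K n m)]
    exact Ideal.mul_mem_mul (X_sq_mem_edgeIdealSQ u) (X_sq_mem_edgeIdealSQ w)

end EdgeIdeal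

theorem stmt3_general {K : Type*} [Field K] (n : ℕ) (m : Fin n → ℕ) :
    ∃ S : Set (MvPolynomial (Σ i : Fin n, Fin (m i)) K),
      (edgeIdealSQ K n m).intClosure = Ideal.span S ∧
      ∀ f ∈ S, ∃ a : (Σ i : Fin n, Fin (m i)) →₀ ℕ,
        (a.sum fun _ e => e) = 2 ∧ f = monomial a (1 : K) := by
  refine ⟨(monomial · 1) '' (Finsupp.degree ⁻¹' {2}), ?_, ?_⟩
  · rw [intClosure_edgeIdealSQ, pow_idealOfVars_eq_span]
  · rintro _ ⟨a, ha, rfl⟩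
    exact ⟨a, ha, rfl⟩

/-- The integral closure of the edge ideal of a strong quasi-`n`-partite
graph is generated by monomials of degree 2. -/
theorem stmt3 {K : Type*} [Field K] (n : ℕ) (hn : 1 ≤ n) (m : Fin n → ℕ)
    (hm : ∀ i, 1 ≤ m i) :
    ∃ S : Set (MvPolynomial (Σ i : Fin n, Fin (m i)) K),
      (edgeIdealSQ K n m).intClosure = Ideal.span S ∧
      ∀ f ∈ S, ∃ a : (Σ i : Fin n, Fin (m i)) →₀ ℕ,
        (a.sum fun _ e => e) = 2 ∧ f = monomial a (1 : K) :=
  stmt3_general n m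
end

section
/- Let G be a strong quasi-n-partite graph with edge ideal I(G) ⊂ T, and let I_c(G) be its ideal of vertex covers. Then the big height of the integral closure of I_c(G) is 1, i.e., every associated prime of T/I_c(G)̄ has height 1. -/
open MvPolynomial

/-- The ideal of vertex covers of the edge ideal of the strong quasi-`n`-partite graph:
generated by the squarefree monomials `∏_{v ∈ C} x_v` for which `(x_v : v ∈ C)` is a
minimal prime of `I(G)`. -/
noncomputable def coverIdealSQ (K : Type*) [Field K] (n : ℕ) (m : Fin n → ℕ) :
    Ideal (MvPolynomial (Σ i : Fin n, Fin (m i)) K) :=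
  Ideal.span
    {f | ∃ C : Finset (Σ i : Fin n, Fin (m i)),
      Ideal.span ((fun v => (X v : MvPolynomial (Σ i : Fin n, Fin (m i)) K)) '' ↑C) ∈
        (edgeIdealSQ K n m).minimalPrimes ∧
      f = ∏ v ∈ C, X v}

/-!
Every `x_v²` lies in `I(G)`, so the ideal of all variables is the only minimal prime of `I(G)`
and `I_c(G)` is the principal ideal generated by `a = ∏ x_v`. A nonzero principal ideal of a
normal domain is integrally closed: an equation of integral dependence of `f` over `(a)`,
divided by `a ^ k`, shows that `f / a` is integral over `T`. Finally, an associated prime of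
`T / (a)` contains some `x_v`, and cancelling the other factors shows it equals `(x_v)`, which
has height one by Krull's principal ideal theorem.
-/

open Ideal

section IntegralClosure

variable {R : Type*} [CommRing R]

theorem Ideal.le_intClosure (I : Ideal R) : I ≤ I.intClosure := fun f hf ↦
  subset_span ⟨1, one_pos, fun _ ↦ -f,
    fun j hj₁ hjk ↦ by rw [le_antisymm hjk hj₁, pow_one]; exact I.neg_mem hf, by simp⟩

theorem Ideal.IsIntegralElemOver.isIntegral_div [IsDomain R] {a f : R} (ha : a ≠ 0)
    (hf : (span {a}).IsIntegralElemOver f) :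
    IsIntegral R (algebraMap R (FractionRing R) f / algebraMap R (FractionRing R) a) := by
  obtain ⟨k, hk, c, hc, hrel⟩ := hf
  have hcoeff : ∀ j ∈ Finset.Icc 1 k, ∃ d, c j = d * a ^ j := fun j hj ↦ by
    obtain ⟨hj₁, hjk⟩ := Finset.mem_Icc.mp hj
    obtain ⟨d, hd⟩ := mem_span_singleton'.mp (span_singleton_pow a j ▸ hc j hj₁ hjk)
    exact ⟨d, hd.symm⟩
  choose! d hd using hcoeff
  set A := algebraMap R (FractionRing R) a
  set x := algebraMap R (FractionRing R) f / A
  have hA : A ≠ 0 := (map_ne_zero_iff _ (IsFractionRing.injective R _)).mpr ha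
  have hAx : A * x = algebraMap R _ f := mul_div_cancel₀ _ hA
  let Q : Polynomial R := .X ^ k + ∑ j ∈ Finset.Icc 1 k, .C (d j) * .X ^ (k - j)
  refine ⟨Q, Polynomial.monic_X_pow_add ?_, ?_⟩
  · refine (Polynomial.degree_sum_le _ _).trans_lt ((Finset.sup_lt_iff ?_).mpr fun j hj ↦ ?_)
    · exact WithBot.bot_lt_coe k
    refine (Polynomial.degree_C_mul_X_pow_le _ _).trans_lt ?_
    exact_mod_cast Nat.sub_lt hk (Finset.mem_Icc.mp hj).1
  have hscaled : A ^ k * Q.eval₂ (algebraMap R _) x = algebraMap R _ (f ^ k +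
      ∑ j ∈ Finset.Icc 1 k, c j * f ^ (k - j)) := by
    simp only [Q, Polynomial.eval₂_add, Polynomial.eval₂_X_pow, Polynomial.eval₂_finsetSum,
      Polynomial.eval₂_mul, Polynomial.eval₂_C, mul_add, Finset.mul_sum, map_add, map_sum,
      map_mul, map_pow, ← hAx, mul_pow]
    refine congrArg _ (Finset.sum_congr rfl fun j hj ↦ ?_)
    rw [hd j hj, map_mul, map_pow, ← pow_mul_pow_sub A (Finset.mem_Icc.mp hj).2]
    ring
  rw [hrel, map_zero] at hscaled
  exact (mul_eq_zero.mp hscaled).resolve_left (pow_ne_zero _ hA)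

theorem Ideal.IsIntegralElemOver.dvd_of_span_singleton [IsDomain R] [IsIntegrallyClosed R]
    {a f : R} (ha : a ≠ 0) (hf : (span {a}).IsIntegralElemOver f) : a ∣ f := by
  obtain ⟨g, hg⟩ := IsIntegrallyClosed.isIntegral_iff.mp (hf.isIntegral_div ha)
  refine ⟨g, IsFractionRing.injective R (FractionRing R) ?_⟩
  rw [map_mul, hg, mul_div_cancel₀]
  exact (map_ne_zero_iff _ (IsFractionRing.injective R _)).mpr ha

theorem Ideal.intClosure_span_singleton [IsDomain R] [IsIntegrallyClosed R] {a : R}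
    (ha : a ≠ 0) : (span {a}).intClosure = span {a} :=
  le_antisymm (span_le.mpr fun _ hf ↦ mem_span_singleton.mpr (hf.dvd_of_span_singleton ha))
    (le_intClosure _)

end IntegralClosure

section AssociatedPrimes

variable {R : Type*} [CommRing R]

theorem Ideal.mem_colon_quotient_mk_iff {I : Ideal R} {r b : R} :
    r ∈ (⊥ : Submodule R (R ⧸ I)).colon {Ideal.Quotient.mk I b} ↔ r * b ∈ I := by
  rw [Submodule.mem_colon_singleton, Algebra.smul_def, Quotient.algebraMap_eq, ← map_mul,
    Submodule.mem_bot, Quotient.eq_zero_iff_mem]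

variable [IsDomain R] [IsNoetherianRing R]

theorem eq_span_singleton_of_isAssociatedPrime_quotient_span_mul {q a : R} (hq : Prime q)
    {p : Ideal R} (hp : IsAssociatedPrime p (R ⧸ span {q * a})) (hqp : q ∈ p) :
    p = span {q} := by
  obtain ⟨hprime, x, rfl⟩ := isAssociatedPrime_iff.mp hp
  obtain ⟨b, rfl⟩ := Ideal.Quotient.mk_surjective x
  rw [mem_colon_quotient_mk_iff, mem_span_singleton] at hqp
  obtain ⟨c, rfl⟩ := (mul_dvd_mul_iff_left hq.ne_zero).mp hqp
  have hc : ¬ q * a ∣ a * c := fun h ↦ hprime.ne_top <| (eq_top_iff_one _).mpr <|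
    mem_colon_quotient_mk_iff.mpr (by simpa [mem_span_singleton] using h)
  have ha : a ≠ 0 := by rintro rfl; simp at hc
  rw [mul_comm q, mul_dvd_mul_iff_left ha] at hc
  ext r
  rw [mem_colon_quotient_mk_iff, mem_span_singleton, mem_span_singleton, mul_left_comm,
    mul_comm q, mul_dvd_mul_iff_left ha]
  exact ⟨fun h ↦ (hq.dvd_or_dvd h).resolve_right hc, fun h ↦ h.mul_right c⟩

theorem exists_eq_span_of_isAssociatedPrime_quotient_span_prod {ι : Type*} {s : Finset ι}
    {f : ι → R} (hf : ∀ i ∈ s, Prime (f i)) {p : Ideal R}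
    (hp : IsAssociatedPrime p (R ⧸ span {∏ i ∈ s, f i})) : ∃ i ∈ s, p = span {f i} := by
  classical
  have hprod : ∏ i ∈ s, f i ∈ p := by
    refine hp.annihilator_le ?_
    rw [Submodule.annihilator_top, Ideal.annihilator_quotient]
    exact mem_span_singleton_self _
  obtain ⟨i, hi, hfi⟩ := hp.isPrime.prod_mem_iff.mp hprod
  rw [← Finset.mul_prod_erase s f hi] at hp
  exact ⟨i, hi, eq_span_singleton_of_isAssociatedPrime_quotient_span_mul (hf i hi) hp hfi⟩

theorem height_span_singleton_eq_one_of_prime {q : R} (hq : Prime q) (h : (span {q}).IsPrime) :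
    Order.height (⟨span {q}, h⟩ : PrimeSpectrum R) = 1 := by
  rw [← PrimeSpectrum.height_eq_orderHeight]
  exact height_span_singleton_eq_one_of_mem_nonZeroDivisors
    (mem_nonZeroDivisors_of_ne_zero hq.ne_zero) hq.not_isUnit

end AssociatedPrimes

namespace MvPolynomial

variable {σ R : Type*}

theorem idealOfVars_eq_ker_constantCoeff [CommSemiring R] :
    idealOfVars σ R = RingHom.ker (constantCoeff : MvPolynomial σ R →+* R) := by
  ext p
  rw [← pow_one (idealOfVars σ R), mem_pow_idealOfVars_iff', RingHom.mem_ker, constantCoeff_eq]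
  simp [Finsupp.degree_eq_zero_iff]

theorem isPrime_idealOfVars [CommRing R] [IsDomain R] : (idealOfVars σ R).IsPrime := by
  rw [idealOfVars_eq_ker_constantCoeff]
  exact RingHom.ker_isPrime _

theorem X_mem_span_X_image_iff [CommSemiring R] [Nontrivial R] {s : Set σ} {v : σ} :
    X v ∈ span (X '' s : Set (MvPolynomial σ R)) ↔ v ∈ s := by
  classical
  simp [mem_ideal_span_X_image, support_X, Finsupp.single_apply]

theorem span_X_image_eq_idealOfVars_iff [CommSemiring R] [Nontrivial R] {s : Set σ} :
    span (X '' s : Set (MvPolynomial σ R)) = idealOfVars σ R ↔ s = Set.univ := by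
  refine ⟨fun h ↦ Set.eq_univ_of_forall fun v ↦ X_mem_span_X_image_iff (R := R).mp ?_, ?_⟩
  · exact h ▸ subset_span (Set.mem_range_self v)
  · rintro rfl
    rw [Set.image_univ]

end MvPolynomial

section QuasiMultipartite

open MvPolynomial

variable {K : Type*} [Field K] {n : ℕ} {m : Fin n → ℕ}

theorem radical_edgeIdealSQ : (edgeIdealSQ K n m).radical = idealOfVars _ K := by
  refine le_antisymm ((radical_mono (span_le.mpr ?_)).trans isPrime_idealOfVars.radical.le) ?_
  · rintro f (⟨i, i', h, h', -, rfl⟩ | ⟨i, h, rfl⟩)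
    · exact mul_mem_right _ _ (subset_span (Set.mem_range_self _))
    · exact pow_mem_of_mem _ (subset_span (Set.mem_range_self _)) 2 two_pos
  · rw [span_le]
    rintro _ ⟨⟨i, h⟩, rfl⟩
    exact ⟨2, subset_span (Or.inr ⟨i, h, rfl⟩)⟩

theorem minimalPrimes_edgeIdealSQ : (edgeIdealSQ K n m).minimalPrimes = {idealOfVars _ K} := by
  rw [← radical_minimalPrimes, radical_edgeIdealSQ,
    @minimalPrimes_eq_subsingleton_self _ _ _ isPrime_idealOfVars]

theorem coverIdealSQ_eq_span_prod_X : coverIdealSQ K n m = span {∏ v, X v} := by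
  unfold coverIdealSQ
  congr 1
  ext f
  simp only [minimalPrimes_edgeIdealSQ, Set.mem_singleton_iff, span_X_image_eq_idealOfVars_iff,
    Finset.coe_eq_univ, Set.mem_ofPred_eq, exists_eq_left]

end QuasiMultipartite

/-- The big height of the integral closure of the cover ideal `I_c(G)` of a
strong quasi-`n`-partite graph is `1`: every associated prime of `T / I_c(G)̄` has
height `1` (and associated primes exist). -/
theorem stmt17 {K : Type*} [Field K] (n : ℕ) (hn : 1 ≤ n) (m : Fin n → ℕ)
    (hm : ∀ i, 1 ≤ m i) :
    (∃ p : Ideal (MvPolynomial (Σ i : Fin n, Fin (m i)) K),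
      IsAssociatedPrime p (MvPolynomial (Σ i : Fin n, Fin (m i)) K ⧸
        (coverIdealSQ K n m).intClosure)) ∧
    (∀ (p : Ideal (MvPolynomial (Σ i : Fin n, Fin (m i)) K))
      (hp : IsAssociatedPrime p (MvPolynomial (Σ i : Fin n, Fin (m i)) K ⧸
        (coverIdealSQ K n m).intClosure)),
      Order.height (⟨p, hp.1⟩ :
        PrimeSpectrum (MvPolynomial (Σ i : Fin n, Fin (m i)) K)) = 1) := by
  have hprod : ∏ v, X v ≠ (0 : MvPolynomial (Σ i : Fin n, Fin (m i)) K) :=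
    Finset.prod_ne_zero_iff.mpr fun v _ ↦ X_ne_zero v
  rw [coverIdealSQ_eq_span_prod_X, intClosure_span_singleton hprod]
  have : Nontrivial (MvPolynomial (Σ i : Fin n, Fin (m i)) K ⧸
      span {∏ v, (X v : MvPolynomial (Σ i : Fin n, Fin (m i)) K)}) := by
    let v : Σ i : Fin n, Fin (m i) := ⟨⟨0, hn⟩, ⟨0, hm _⟩⟩
    refine Quotient.nontrivial_iff.mpr fun h ↦ (X_prime (R := K) (i := v)).not_isUnit ?_
    exact isUnit_of_dvd_unit (Finset.dvd_prod_of_mem _ (Finset.mem_univ v))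
      (span_singleton_eq_top.mp h)
  refine ⟨associatedPrimes.nonempty _ _, fun p hp ↦ ?_⟩
  obtain ⟨v, -, rfl⟩ := exists_eq_span_of_isAssociatedPrime_quotient_span_prod
    (fun v _ ↦ X_prime) hp
  exact height_span_singleton_eq_one_of_prime X_prime _
end
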